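/- Corner uniqueness for the Navier source (core lemma): Let O = 0 ∈ ℝ², let τ₁, τ₂ ∈ ℝ² be two linearly independent unit vectors, and let Γ⁺ = {t τ₁ : 0 < t < R}, Γ⁻ = {t τ₂ : 0 < t < R}. Let w : ℝ² → ℝ² be C² on the ball B_R(O) and S : ℝ² → ℝ² continuous, satisfying μΔw + (λ+μ)∇div w + ω²w = S in B_R(O), with μ > 0, λ+2μ > 0. Suppose w = 0 on Γ⁺ ∪ Γ⁻ and the normal derivatives ∂_{ν}w = 0 on Γ⁺ ∪ Γ⁻ (where ν is a unit normal to the respective segment). Then S(O) = 0. -/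

import Mathlib

/-! On each segment `w` vanishes, hence so does its tangential derivative; together with the
normal derivative this kills the whole Jacobian `Dw` along the segment. Differentiating `Dw`
along the segment and letting the point tend to the corner gives `D²w(O) τᵢ = 0` for `i = 1, 2`,
and since `τ₁, τ₂` span the plane, `D²w(O) = 0`. Thus `Lw(O) = 0`, while `w(O) = 0` by
continuity, so `S(O) = Lw(O) + ω² w(O) = 0`. -/

noncomputable section

/-- Points/vectors of the plane. -/
abbrev R2 := Fin 2 → ℝ

def e1 : R2 := ![1, 0]
def e2 : R2 := ![0, 1]

/-- Euclidean inner product on `R2`. -/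
def inn (a b : R2) : ℝ := a 0 * b 0 + a 1 * b 1

/-- Directional derivative `∂_v w (x) = Dw(x) v`. -/
def dd (w : R2 → R2) (v x : R2) : R2 := fderiv ℝ w x v

/-- Second directional derivative `∂_u ∂_v w (x) = D²w(x)(u,v)`. -/
def d2 (w : R2 → R2) (u v x : R2) : R2 := fderiv ℝ (fun y => fderiv ℝ w y v) x u

/-- Divergence of a planar vector field. -/
def divg (w : R2 → R2) (x : R2) : ℝ := fderiv ℝ w x e1 0 + fderiv ℝ w x e2 1

/-- Scalar curl of a planar vector field: `∂₁w₂ - ∂₂w₁`. -/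
def curl2 (w : R2 → R2) (x : R2) : ℝ := fderiv ℝ w x e1 1 - fderiv ℝ w x e2 0

/-- `ν × s := (-ν₂ s, ν₁ s)` for a scalar `s`. -/
def rot (ν : R2) (s : ℝ) : R2 := ![-(ν 1) * s, ν 0 * s]

/-- Traction operator `Tw = 2μ ∂_ν w + λ ν div w + μ ν × curl w`. -/
def trac (μ lam : ℝ) (ν : R2) (w : R2 → R2) (x : R2) : R2 :=
  (2 * μ) • dd w ν x + (lam * divg w x) • ν + μ • rot ν (curl2 w x)

/-- Günter (tangential) derivative `Mw = ∂_ν w - ν div w + ν × curl w`. -/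
def gunter (ν : R2) (w : R2 → R2) (x : R2) : R2 :=
  dd w ν x - (divg w x) • ν + rot ν (curl2 w x)

/-- Componentwise Laplacian of a planar vector field. -/
def lap (w : R2 → R2) (x : R2) : R2 := d2 w e1 e1 x + d2 w e2 e2 x

/-- Scalar Laplacian. -/
def lapS (f : R2 → ℝ) (x : R2) : ℝ :=
  fderiv ℝ (fun y => fderiv ℝ f y e1) x e1 + fderiv ℝ (fun y => fderiv ℝ f y e2) x e2

/-- Gradient of a scalar field. -/
def gradS (f : R2 → ℝ) (x : R2) : R2 := ![fderiv ℝ f x e1, fderiv ℝ f x e2]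

/-- Lamé (Navier) operator `Lw = μ Δw + (λ+μ) ∇ div w`. -/
def lame (μ lam : ℝ) (w : R2 → R2) (x : R2) : R2 :=
  μ • lap w x + (lam + μ) • gradS (divg w) x

open Filter Topology

theorem LinearMap.eq_zero_of_linearIndependent_pair {K V W : Type*} [Field K]
    [AddCommGroup V] [Module K V] [AddCommGroup W] [Module K W] (hV : Module.finrank K V = 2)
    {L : V →ₗ[K] W} {u v : V} (huv : LinearIndependent K ![u, v]) (hu : L u = 0)
    (hv : L v = 0) : L = 0 :=
  LinearMap.ext_on_range (huv.span_eq_top_of_card_eq_finrank (by simp [hV]))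
    fun i => by fin_cases i <;> simpa

section Ray

variable {E F : Type*} [NormedAddCommGroup E] [NormedSpace ℝ E]
  [NormedAddCommGroup F] [NormedSpace ℝ F]

theorem ContinuousLinearMap.eq_zero_of_linearIndependent_pair
    (hE : Module.finrank ℝ E = 2) {L : E →L[ℝ] F} {u v : E}
    (huv : LinearIndependent ℝ ![u, v]) (hu : L u = 0) (hv : L v = 0) : L = 0 :=
  coe_injective (L.toLinearMap.eq_zero_of_linearIndependent_pair hE huv hu hv)

theorem fderiv_clm_comp_eq_zero {G : Type*} [NormedAddCommGroup G] [NormedSpace ℝ G]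
    (A : F →L[ℝ] G) {g : E → F} {x : E} (hg : DifferentiableAt ℝ g x)
    (h : fderiv ℝ g x = 0) : fderiv ℝ (fun y => A (g y)) x = 0 := by
  rw [← Function.comp_def, fderiv_comp x A.differentiableAt hg, h,
    ContinuousLinearMap.comp_zero]

theorem tendsto_smul_nhdsGT_zero (v : E) :
    Tendsto (fun t : ℝ => t • v) (𝓝[>] 0) (𝓝 0) :=
  ((continuous_id.smul continuous_const).tendsto' 0 0 (zero_smul ℝ v)).mono_left
    nhdsWithin_le_nhds

theorem eq_of_continuousAt_of_eventually_eq_on_ray {Y : Type*} [TopologicalSpace Y]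
    [T2Space Y] {g : E → Y} {v : E} {y : Y} (hg : ContinuousAt g 0)
    (h : ∀ᶠ t in 𝓝[>] (0 : ℝ), g (t • v) = y) : g 0 = y :=
  tendsto_nhds_unique (hg.tendsto.comp (tendsto_smul_nhdsGT_zero v))
    (tendsto_const_nhds.congr' (h.mono fun _ ht => ht.symm))

theorem eventually_fderiv_apply_eq_zero_on_ray {f : E → F} {v : E}
    (hf : ∀ᶠ t in 𝓝[>] (0 : ℝ), DifferentiableAt ℝ f (t • v))
    (h : ∀ᶠ t in 𝓝[>] (0 : ℝ), f (t • v) = 0) :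
    ∀ᶠ t in 𝓝[>] (0 : ℝ), fderiv ℝ f (t • v) v = 0 := by
  filter_upwards [hf, eventually_eventually_nhdsWithin.2 h, self_mem_nhdsWithin]
    with t hft hzt (ht : 0 < t)
  rw [isOpen_Ioi.nhdsWithin_eq ht] at hzt
  have hline : HasDerivAt (fun s : ℝ => s • v) v t := by
    simpa using (hasDerivAt_id t).smul_const v
  exact (hft.hasFDerivAt.comp_hasDerivAt t hline).unique
    ((hasDerivAt_const t 0).congr_of_eventuallyEq hzt)

theorem fderiv_apply_eq_zero_of_eventually_eq_zero_on_ray {f : E → F} {v : E}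
    (hf : ∀ᶠ t in 𝓝[>] (0 : ℝ), DifferentiableAt ℝ f (t • v))
    (hcont : ContinuousAt (fderiv ℝ f) 0)
    (h : ∀ᶠ t in 𝓝[>] (0 : ℝ), f (t • v) = 0) : fderiv ℝ f 0 v = 0 :=
  eq_of_continuousAt_of_eventually_eq_on_ray (g := fun x => fderiv ℝ f x v)
    (hcont.clm_apply continuousAt_const) (eventually_fderiv_apply_eq_zero_on_ray hf h)

theorem fderiv_fderiv_apply_eq_zero_of_vanishing_on_ray (hE : Module.finrank ℝ E = 2)
    {w : E → F} {τ ν : E} (hw : ∀ᶠ x in 𝓝 0, ContDiffAt ℝ 2 w x)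
    (hτν : LinearIndependent ℝ ![τ, ν]) (h0 : ∀ᶠ t in 𝓝[>] (0 : ℝ), w (t • τ) = 0)
    (hν : ∀ᶠ t in 𝓝[>] (0 : ℝ), fderiv ℝ w (t • τ) ν = 0) :
    fderiv ℝ (fderiv ℝ w) 0 τ = 0 := by
  have hray := (tendsto_smul_nhdsGT_zero τ).eventually hw
  have hDw : ∀ᶠ t in 𝓝[>] (0 : ℝ), fderiv ℝ w (t • τ) = 0 := by
    filter_upwards [eventually_fderiv_apply_eq_zero_on_ray
      (hray.mono fun _ h => h.differentiableAt two_ne_zero) h0, hν] with t hτ hν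
    exact ContinuousLinearMap.eq_zero_of_linearIndependent_pair hE hτν hτ hν
  exact fderiv_apply_eq_zero_of_eventually_eq_zero_on_ray
    (hray.mono fun _ h => (h.fderiv_right one_add_one_eq_two.le).differentiableAt one_ne_zero)
    ((hw.self_of_nhds.fderiv_right one_add_one_eq_two.le).fderiv_right
      (zero_add 1).le).continuousAt
    hDw

end Ray

theorem linearIndependent_pair_of_inn {τ ν : R2} (hτ : τ ≠ 0) (hν : inn ν ν = 1)
    (hn : inn ν τ = 0) : LinearIndependent ℝ ![τ, ν] := by
  refine LinearIndependent.pair_iff.2 fun s t hst => ?_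
  have ht : t = 0 := by
    have := congrArg (inn ν) hst
    simp only [inn, Pi.add_apply, Pi.smul_apply, smul_eq_mul, Pi.zero_apply] at this hν hn
    linear_combination this - s * hn - t * hν
  subst ht
  simpa [hτ] using hst

theorem lame_eq_zero_of_fderiv_fderiv_eq_zero (μ lam : ℝ) {w : R2 → R2} {x : R2}
    (hd : DifferentiableAt ℝ (fderiv ℝ w) x) (h : fderiv ℝ (fderiv ℝ w) x = 0) :
    lame μ lam w x = 0 := by
  have hd2 (u v : R2) : d2 w u v x = 0 := by
    rw [d2, show (fun y => fderiv ℝ w y v) = fun y => ContinuousLinearMap.apply ℝ R2 v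
      (fderiv ℝ w y) from rfl, fderiv_clm_comp_eq_zero _ hd h, zero_apply]
  have hdiv : fderiv ℝ (divg w) x = 0 :=
    fderiv_clm_comp_eq_zero ((ContinuousLinearMap.proj 0).comp (ContinuousLinearMap.apply ℝ R2 e1)
      + (ContinuousLinearMap.proj 1).comp (ContinuousLinearMap.apply ℝ R2 e2)) hd h
  simp [lame, lap, gradS, hd2, hdiv]

theorem stmt_10_general (μ lam ω R : ℝ) (hR : 0 < R)
    (τ₁ τ₂ ν₁ ν₂ : R2) (hind : LinearIndependent ℝ ![τ₁, τ₂])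
    (hν1 : inn ν₁ ν₁ = 1) (hν2 : inn ν₂ ν₂ = 1)
    (hn1 : inn ν₁ τ₁ = 0) (hn2 : inn ν₂ τ₂ = 0)
    (w S : R2 → R2)
    (hw : ContDiffOn ℝ 2 w (Metric.ball (0 : R2) R))
    (heq : ∀ x ∈ Metric.ball (0 : R2) R, lame μ lam w x + ω ^ 2 • w x = S x)
    (hw0 : ∀ t : ℝ, 0 < t → t < R → w (t • τ₁) = 0 ∧ w (t • τ₂) = 0)
    (hdn : ∀ t : ℝ, 0 < t → t < R →
      dd w ν₁ (t • τ₁) = 0 ∧ dd w ν₂ (t • τ₂) = 0) :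
    S (0 : R2) = 0 := by
  have hfin : Module.finrank ℝ R2 = 2 := Module.finrank_fin_fun ℝ
  have hw2 : ∀ᶠ x in 𝓝 (0 : R2), ContDiffAt ℝ 2 w x :=
    eventually_of_mem (Metric.ball_mem_nhds 0 hR) fun x hx =>
      hw.contDiffAt (Metric.isOpen_ball.mem_nhds hx)
  have hseg : ∀ᶠ t in 𝓝[>] (0 : ℝ),
      (w (t • τ₁) = 0 ∧ w (t • τ₂) = 0) ∧ (dd w ν₁ (t • τ₁) = 0 ∧ dd w ν₂ (t • τ₂) = 0) := by
    filter_upwards [Ioo_mem_nhdsGT hR] with t ht using ⟨hw0 t ht.1 ht.2, hdn t ht.1 ht.2⟩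
  have hD₁ := fderiv_fderiv_apply_eq_zero_of_vanishing_on_ray hfin hw2
    (linearIndependent_pair_of_inn (hind.ne_zero 0) hν1 hn1)
    (hseg.mono fun _ h => h.1.1) (hseg.mono fun _ h => h.2.1)
  have hD₂ := fderiv_fderiv_apply_eq_zero_of_vanishing_on_ray hfin hw2
    (linearIndependent_pair_of_inn (hind.ne_zero 1) hν2 hn2)
    (hseg.mono fun _ h => h.1.2) (hseg.mono fun _ h => h.2.2)
  have hD : fderiv ℝ (fderiv ℝ w) 0 = 0 :=
    ContinuousLinearMap.eq_zero_of_linearIndependent_pair hfin hind hD₁ hD₂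
  have hw_zero : w 0 = 0 := eq_of_continuousAt_of_eventually_eq_on_ray
    hw2.self_of_nhds.continuousAt (hseg.mono fun _ h => h.1.1)
  have hDw : DifferentiableAt ℝ (fderiv ℝ w) 0 :=
    (hw2.self_of_nhds.fderiv_right one_add_one_eq_two.le).differentiableAt one_ne_zero
  rw [← heq 0 (Metric.mem_ball_self hR), lame_eq_zero_of_fderiv_fderiv_eq_zero μ lam hDw hD,
    hw_zero, smul_zero, add_zero]

/-- corner uniqueness for the Navier source. If `w` solves
`Lw + ω² w = S` in `B_R(0)` and vanishes together with its normal derivative on two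
segments issued from the origin with linearly independent directions, then `S(0) = 0`. -/
theorem stmt_10 (μ lam ω R : ℝ) (hμ : 0 < μ) (hlam : 0 < lam + 2 * μ) (hω : 0 < ω)
    (hR : 0 < R)
    (τ₁ τ₂ ν₁ ν₂ : R2) (hind : LinearIndependent ℝ ![τ₁, τ₂])
    (hτ1 : inn τ₁ τ₁ = 1) (hτ2 : inn τ₂ τ₂ = 1)
    (hν1 : inn ν₁ ν₁ = 1) (hν2 : inn ν₂ ν₂ = 1)
    (hn1 : inn ν₁ τ₁ = 0) (hn2 : inn ν₂ τ₂ = 0)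
    (w S : R2 → R2)
    (hw : ContDiffOn ℝ 2 w (Metric.ball (0 : R2) R)) (hS : Continuous S)
    (heq : ∀ x ∈ Metric.ball (0 : R2) R, lame μ lam w x + ω ^ 2 • w x = S x)
    (hw0 : ∀ t : ℝ, 0 < t → t < R → w (t • τ₁) = 0 ∧ w (t • τ₂) = 0)
    (hdn : ∀ t : ℝ, 0 < t → t < R →
      dd w ν₁ (t • τ₁) = 0 ∧ dd w ν₂ (t • τ₂) = 0) :
    S (0 : R2) = 0 :=
  stmt_10_general μ lam ω R hR τ₁ τ₂ ν₁ ν₂ hind hν1 hν2 hn1 hn2 w S hw heq hw0 hdn
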